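/- arXiv:2010.05604 — 2 statements merged into one kernel-verified Lean document; each statement's English description precedes it below -/
import Mathlib

section
/- Let U ⊂ ℝ^N be open and G̃ : U × ℝ^N → ℝ a Finsler-type energy on U (continuous, C² for v ≠ 0, fiberwise positively 2-homogeneous, with (1/ℓ)‖v‖² ≤ G̃(z,v) ≤ ℓ‖v‖² and d²_{vv}G̃(z,v)[w,w] ≥ α‖w‖² for v ≠ 0). Extend d_vG̃ to v = 0 by d_vG̃(z,0) := 0. Let ξ_n, ξ : [a,b] → U be H¹ curves such that ξ_n → ξ uniformly, ξ̇_n converges weakly in L² to ξ̇, and liminf_{n→∞} ∫_a^b ( d_vG̃(ξ_n,ξ̇_n) − d_vG̃(ξ_n,ξ̇) )[ξ̇ − ξ̇_n] ds ≥ 0. Then ξ̇_n → ξ̇ strongly in L², i.e. ∫_a^b ‖ξ̇ − ξ̇_n‖² ds → 0. -/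
open MeasureTheory Set Filter RealInnerProductSpace

noncomputable section

/-- Euclidean space `ℝ^n`. -/
abbrev Evec (n : ℕ) := EuclideanSpace ℝ (Fin n)

/-- An `H¹` curve on `[a,b]`: an absolutely continuous curve whose a.e. derivative is
square-integrable, encoded by a choice of (integrable, square-integrable) derivative
together with the fundamental theorem of calculus identity. -/
structure H1Curve (n : ℕ) (a b : ℝ) where
  toFun : ℝ → Evec n
  deriv : ℝ → Evec n
  deriv_integrable : IntegrableOn deriv (Icc a b)
  deriv_sq_integrable : IntegrableOn (fun s => ‖deriv s‖ ^ 2) (Icc a b)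
  eq_add_integral : ∀ t ∈ Icc a b, toFun t = toFun a + ∫ s in a..t, deriv s

open scoped Topology

/-! The liminf hypothesis compares `d_vG̃` at two velocities over the same base point, so only
the fibres matter. For fixed `z`, `v ↦ d_vG̃(z,v)` is strongly monotone:
`(d_vG̃(z,v) - d_vG̃(z,w))[v - w] ≥ min(α, 2/ℓ) ‖v - w‖²`. If the segment from `w` to `v` avoids
`0`, this is the Hessian bound integrated along it; otherwise `v` and `w` are nonnegative multiples
of `u = v - w` and `-u`, and Euler's identity `d_vG̃(z, s x)[x] = 2 s G̃(z,x)` with `G̃ ≥ ‖·‖²/ℓ`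
gives the constant `2/ℓ`. Integrating at `z = ξ_n`, `v = ξ̇`, `w = ξ̇_n` bounds
`min(α, 2/ℓ) ∫ ‖ξ̇ - ξ̇_n‖²` by minus the integral in the hypothesis.
The upper bound `G̃ ≤ ℓ‖·‖²` makes `d_vG̃` vanish to first order at the zero section, which gives
its continuity there and the linear growth that makes the integrands integrable. -/

section Fiber

variable {E : Type*} [NormedAddCommGroup E] [NormedSpace ℝ E] {F : E → ℝ}

theorem hasFDerivAt_zero_of_norm_le_sq {V : Type*} [NormedAddCommGroup V] [NormedSpace ℝ V]
    {f : E → V} {C : ℝ} (h : ∀ v, ‖f v‖ ≤ C * ‖v‖ ^ 2) : HasFDerivAt f (0 : E →L[ℝ] V) 0 :=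
  Asymptotics.IsBigO.hasFDerivAt (n := 2)
    (Asymptotics.IsBigO.of_bound C (Eventually.of_forall fun v => by simpa using h v)) one_lt_two

theorem fderiv_zero_eq_zero_of_le_sq (hnn : ∀ v, 0 ≤ F v) {ℓ : ℝ}
    (hupp : ∀ v, F v ≤ ℓ * ‖v‖ ^ 2) : fderiv ℝ F 0 = 0 :=
  (hasFDerivAt_zero_of_norm_le_sq fun v => (Real.norm_of_nonneg (hnn v)).trans_le (hupp v)).fderiv

theorem fderiv_apply_add_le_fderiv_add_apply {α : ℝ}
    (hF : ∀ y, y ≠ 0 → ContDiffAt ℝ 2 F y)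
    (hcv : ∀ y, y ≠ 0 → ∀ w, α * ‖w‖ ^ 2 ≤ fderiv ℝ (fun y' => fderiv ℝ F y' w) y w)
    {x u : E} (hseg : ∀ t ∈ Icc (0 : ℝ) 1, x + t • u ≠ 0) :
    fderiv ℝ F x u + α * ‖u‖ ^ 2 ≤ fderiv ℝ F (x + u) u := by
  have hder : ∀ t ∈ Icc (0 : ℝ) 1, HasDerivAt (fun r : ℝ => fderiv ℝ F (x + r • u) u)
      (fderiv ℝ (fun y => fderiv ℝ F y u) (x + t • u) u) t := by
    intro t ht
    have hdiff : DifferentiableAt ℝ (fun y => fderiv ℝ F y u) (x + t • u) :=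
      (((hF _ (hseg t ht)).fderiv_right (m := 1) le_rfl).differentiableAt one_ne_zero).clm_apply
        (differentiableAt_const u)
    have hpath : HasDerivAt (fun r : ℝ => x + r • u) u t := by
      simpa using ((hasDerivAt_id t).smul_const u).const_add x
    exact hdiff.hasFDerivAt.comp_hasDerivAt t hpath
  obtain ⟨c, hc, hslope⟩ := exists_hasDerivAt_eq_slope _ _ zero_lt_one
    (fun t ht => (hder t ht).continuousAt.continuousWithinAt)
    (fun t ht => hder t (Ioo_subset_Icc_self ht))
  have := hcv _ (hseg c (Ioo_subset_Icc_self hc)) u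
  simp only [one_smul, zero_smul, add_zero, sub_zero, div_one] at hslope
  linarith

theorem fderiv_apply_le_sub
    (hF : ∀ y, y ≠ 0 → ContDiffAt ℝ 2 F y)
    (hcv : ∀ y, y ≠ 0 → ∀ w, 0 ≤ fderiv ℝ (fun y' => fderiv ℝ F y' w) y w)
    {x h : E} (hh : ‖h‖ < ‖x‖) :
    fderiv ℝ F x h ≤ F (x + h) - F x := by
  have hseg : ∀ t ∈ Icc (0 : ℝ) 1, x + t • h ≠ 0 := by
    intro t ht
    have h1 : ‖t • h‖ ≤ ‖h‖ := by
      rw [norm_smul, Real.norm_of_nonneg ht.1]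
      exact mul_le_of_le_one_left (norm_nonneg _) ht.2
    have h2 : ‖x‖ ≤ ‖x + t • h‖ + ‖t • h‖ := by simpa using norm_sub_le (x + t • h) (t • h)
    exact norm_pos_iff.1 (by linarith)
  have hder : ∀ t ∈ Icc (0 : ℝ) 1, HasDerivAt (fun r : ℝ => F (x + r • h))
      (fderiv ℝ F (x + t • h) h) t := by
    intro t ht
    have hpath : HasDerivAt (fun r : ℝ => x + r • h) h t := by
      simpa using ((hasDerivAt_id t).smul_const h).const_add x
    exact ((hF _ (hseg t ht)).differentiableAt two_ne_zero).hasFDerivAt.comp_hasDerivAt t hpath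
  obtain ⟨c, hc, hslope⟩ := exists_hasDerivAt_eq_slope _ _ zero_lt_one
    (fun t ht => (hder t ht).continuousAt.continuousWithinAt)
    (fun t ht => hder t (Ioo_subset_Icc_self ht))
  simp only [one_smul, zero_smul, add_zero, sub_zero, div_one] at hslope
  have hmono := fderiv_apply_add_le_fderiv_add_apply (α := 0) hF (by simpa using hcv)
    (x := x) (u := c • h) fun t ht => by
      rw [smul_smul]
      exact hseg _ ⟨mul_nonneg ht.1 hc.1.le, mul_le_one₀ ht.2 hc.1.le hc.2.le⟩
  simp only [map_smul, smul_eq_mul, zero_mul, add_zero] at hmono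
  rw [← hslope]
  exact le_of_mul_le_mul_left hmono hc.1

theorem norm_fderiv_le_of_le_sq
    (hF : ∀ y, y ≠ 0 → ContDiffAt ℝ 2 F y)
    (hcv : ∀ y, y ≠ 0 → ∀ w, 0 ≤ fderiv ℝ (fun y' => fderiv ℝ F y' w) y w)
    (hnn : ∀ v, 0 ≤ F v) {ℓ : ℝ} (hupp : ∀ v, F v ≤ ℓ * ‖v‖ ^ 2) (x : E) :
    ‖fderiv ℝ F x‖ ≤ 9 / 2 * ℓ * ‖x‖ := by
  rcases eq_or_ne x 0 with rfl | hx
  · simp [fderiv_zero_eq_zero_of_le_sq hnn hupp]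
  have hx0 : 0 < ‖x‖ := norm_pos_iff.2 hx
  have hℓ : 0 ≤ ℓ := le_of_mul_le_mul_right (by simpa using (hnn x).trans (hupp x)) (pow_pos hx0 2)
  -- slope inequality at the increment `r • w` of norm `‖x‖ / 2`, where `F ≤ ℓ (3‖x‖/2)²`
  have key : ∀ w, fderiv ℝ F x w ≤ 9 / 2 * ℓ * ‖x‖ * ‖w‖ := by
    intro w
    rcases eq_or_ne w 0 with rfl | hw
    · simp
    have hw0 : 0 < ‖w‖ := norm_pos_iff.2 hw
    set r := ‖x‖ / (2 * ‖w‖)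
    have hr : 0 < r := by positivity
    have hnh : ‖r • w‖ = ‖x‖ / 2 := by
      rw [norm_smul, Real.norm_of_nonneg hr.le]; simp only [r]; field_simp
    have hslope := fderiv_apply_le_sub hF hcv (h := r • w) (x := x) (by rw [hnh]; linarith)
    have hxh : ‖x + r • w‖ ≤ 3 / 2 * ‖x‖ := (norm_add_le _ _).trans (by rw [hnh]; linarith)
    have hup : F (x + r • w) ≤ ℓ * (3 / 2 * ‖x‖) ^ 2 :=
      (hupp _).trans (mul_le_mul_of_nonneg_left (pow_le_pow_left₀ (norm_nonneg _) hxh 2) hℓ)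
    rw [map_smul, smul_eq_mul] at hslope
    have : r * fderiv ℝ F x w ≤ r * (9 / 2 * ℓ * ‖x‖ * ‖w‖) := by
      have : r * (9 / 2 * ℓ * ‖x‖ * ‖w‖) = ℓ * (3 / 2 * ‖x‖) ^ 2 := by
        simp only [r]; field_simp; ring
      linarith [hnn x]
    exact le_of_mul_le_mul_left this hr
  refine ContinuousLinearMap.opNorm_le_bound _ (by positivity) fun w => ?_
  rw [Real.norm_eq_abs, abs_le]
  have := key (-w)
  rw [map_neg, norm_neg] at this
  exact ⟨by linarith, key w⟩

theorem fderiv_smul_apply_self (hF : ∀ y, y ≠ 0 → DifferentiableAt ℝ F y)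
    (hF0 : fderiv ℝ F 0 = 0) (hhom : ∀ v (s : ℝ), 0 < s → F (s • v) = s ^ 2 * F v)
    {x : E} (hx : x ≠ 0) {s : ℝ} (hs : 0 ≤ s) :
    fderiv ℝ F (s • x) x = 2 * s * F x := by
  rcases hs.eq_or_lt with rfl | hs
  · simp [hF0]
  have hline : HasDerivAt (fun t : ℝ => F (t • x)) (fderiv ℝ F (s • x) x) s :=
    (hF _ (smul_ne_zero hs.ne' hx)).hasFDerivAt.comp_hasDerivAt s
      (by simpa using (hasDerivAt_id s).smul_const x)
  have hquad : HasDerivAt (fun t : ℝ => F (t • x)) (2 * s * F x) s :=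
    HasDerivAt.congr_of_eventuallyEq (by simpa using (hasDerivAt_pow 2 s).mul_const (F x))
      ((eventually_gt_nhds hs).mono fun t ht => hhom x t ht)
  exact hline.unique hquad

theorem mul_norm_sub_sq_le_fderiv_sub {α m : ℝ}
    (hF : ∀ y, y ≠ 0 → ContDiffAt ℝ 2 F y) (hF0 : fderiv ℝ F 0 = 0)
    (hcv : ∀ y, y ≠ 0 → ∀ w, α * ‖w‖ ^ 2 ≤ fderiv ℝ (fun y' => fderiv ℝ F y' w) y w)
    (hhom : ∀ v (s : ℝ), 0 < s → F (s • v) = s ^ 2 * F v)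
    (hlow : ∀ v, m * ‖v‖ ^ 2 ≤ F v) (v w : E) :
    min α (2 * m) * ‖v - w‖ ^ 2 ≤ fderiv ℝ F v (v - w) - fderiv ℝ F w (v - w) := by
  obtain ⟨u, rfl⟩ : ∃ u, v = w + u := ⟨v - w, by abel⟩
  rw [add_sub_cancel_left]
  by_cases hseg : ∀ t ∈ Icc (0 : ℝ) 1, w + t • u ≠ 0
  · have := fderiv_apply_add_le_fderiv_add_apply hF hcv hseg
    nlinarith [min_le_left α (2 * m), sq_nonneg ‖u‖]
  -- otherwise `w = t • -u` and `v = (1 - t) • u`, and Euler's identity evaluates both terms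
  push Not at hseg
  obtain ⟨t, ht, hzero⟩ := hseg
  rcases eq_or_ne u 0 with rfl | hu
  · simp
  obtain rfl : w = t • -u := by rw [smul_neg]; exact eq_neg_of_add_eq_zero_left hzero
  have hdF : ∀ y, y ≠ 0 → DifferentiableAt ℝ F y := fun y hy =>
    (hF y hy).differentiableAt two_ne_zero
  have hv : fderiv ℝ F (t • -u + u) u = 2 * (1 - t) * F u := by
    rw [show t • -u + u = (1 - t) • u by module]
    exact fderiv_smul_apply_self hdF hF0 hhom hu (by linarith [ht.2])
  have hw : fderiv ℝ F (t • -u) (-u) = 2 * t * F (-u) :=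
    fderiv_smul_apply_self hdF hF0 hhom (neg_ne_zero.2 hu) ht.1
  rw [map_neg] at hw
  have hlu := hlow u
  have hlnu := hlow (-u)
  rw [norm_neg] at hlnu
  rw [hv]
  nlinarith [min_le_right α (2 * m), sq_nonneg ‖u‖, ht.1, ht.2,
    mul_le_mul_of_nonneg_left hlu (sub_nonneg.2 ht.2), mul_le_mul_of_nonneg_left hlnu ht.1]

end Fiber

theorem isOpen_setOf_fst_mem_and_snd_ne {X Y : Type*} [TopologicalSpace X] [TopologicalSpace Y]
    [T1Space Y] [Zero Y] {U : Set X} (hU : IsOpen U) : IsOpen {p : X × Y | p.1 ∈ U ∧ p.2 ≠ 0} :=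
  (hU.preimage continuous_fst).inter (isOpen_compl_singleton.preimage continuous_snd)

section Family

variable {E : Type*} [NormedAddCommGroup E] [NormedSpace ℝ E]

theorem contDiffAt_fiber_of_contDiffOn {G : E → E → ℝ} {U : Set E} {n : WithTop ℕ∞}
    (hU : IsOpen U) (hG : ContDiffOn ℝ n (fun p : E × E => G p.1 p.2) {p | p.1 ∈ U ∧ p.2 ≠ 0})
    {z y : E} (hz : z ∈ U) (hy : y ≠ 0) : ContDiffAt ℝ n (G z) y :=
  (hG.contDiffAt ((isOpen_setOf_fst_mem_and_snd_ne hU).mem_nhds ⟨hz, hy⟩)).comp y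
    (contDiffAt_const.prodMk contDiffAt_id)

theorem continuousOn_uncurry_of_eq_fderiv {G : E → E → ℝ} {D : E → E → E →L[ℝ] ℝ}
    {U : Set E} {C : ℝ} (hU : IsOpen U)
    (hG : ContDiffOn ℝ 1 (fun p : E × E => G p.1 p.2) {p | p.1 ∈ U ∧ p.2 ≠ 0})
    (hD : ∀ z ∈ U, ∀ x, x ≠ 0 → D z x = fderiv ℝ (G z) x)
    (hbound : ∀ z ∈ U, ∀ x, ‖D z x‖ ≤ C * ‖x‖) :
    ContinuousOn (fun p : E × E => D p.1 p.2) (U ×ˢ univ) := by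
  rintro ⟨z, x⟩ ⟨hz, -⟩
  rcases eq_or_ne x 0 with rfl | hx
  · have hz0 : D z 0 = 0 := norm_le_zero_iff.1 (by simpa using hbound z hz 0)
    have hlim : Tendsto (fun p : E × E => C * ‖p.2‖) (𝓝[U ×ˢ univ] (z, 0)) (𝓝 0) := by
      have : Continuous fun p : E × E => C * ‖p.2‖ := continuous_const.mul continuous_snd.norm
      simpa using (this.tendsto (z, 0)).mono_left nhdsWithin_le_nhds
    rw [ContinuousWithinAt, hz0]
    exact squeeze_zero_norm' (eventually_nhdsWithin_of_forall fun p hp => hbound p.1 hp.1 p.2)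
      hlim
  -- off the zero section `D z x` is the second partial derivative of `G`
  have hS := isOpen_setOf_fst_mem_and_snd_ne (Y := E) hU
  have hmem : {p : E × E | p.1 ∈ U ∧ p.2 ≠ 0} ∈ 𝓝 (z, x) := hS.mem_nhds ⟨hz, hx⟩
  have hpartial : (fun p : E × E => (fderiv ℝ (fun q : E × E => G q.1 q.2) p).comp
      (ContinuousLinearMap.inr ℝ E E)) =ᶠ[𝓝 (z, x)] fun p => D p.1 p.2 := by
    filter_upwards [hmem] with ⟨z', x'⟩ hp
    rw [hD z' hp.1 x' hp.2]
    exact ((((hG.contDiffAt (hS.mem_nhds hp)).differentiableAt one_ne_zero).hasFDerivAt).comp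
      x' (hasFDerivAt_prodMk_right z' x')).fderiv.symm
  exact ((((hG.continuousOn_fderiv_of_isOpen hS le_rfl).continuousAt hmem).clm_comp
    continuousAt_const).congr hpartial).continuousWithinAt

end Family

theorem ContinuousOn.aemeasurable_comp {α β γ : Type*} [MeasurableSpace α] {μ : Measure α}
    [TopologicalSpace β] [MeasurableSpace β] [OpensMeasurableSpace β]
    [TopologicalSpace γ] [MeasurableSpace γ] [BorelSpace γ]
    {f : β → γ} {S : Set β} (hf : ContinuousOn f S) (hS : MeasurableSet S)
    {g : α → β} (hg : AEMeasurable g μ) (hgS : ∀ᵐ a ∂μ, g a ∈ S) :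
    AEMeasurable (fun a => f (g a)) μ := by
  have hmap : (μ.map g).restrict S = μ.map g :=
    Measure.restrict_eq_self_of_ae_mem ((ae_map_iff hg hS).2 hgS)
  exact (hmap ▸ hf.aemeasurable hS).comp_aemeasurable hg

theorem integrable_apply_apply_of_memLp {Ω : Type*} [MeasurableSpace Ω] {μ : Measure Ω}
    {E : Type*} [NormedAddCommGroup E] [NormedSpace ℝ E] [MeasurableSpace E] [BorelSpace E]
    [SecondCountableTopology E]
    {D : E → E → E →L[ℝ] ℝ} {U : Set E} {C : ℝ} (hU : IsOpen U)
    (hD : ContinuousOn (fun p : E × E => D p.1 p.2) (U ×ˢ univ))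
    (hbound : ∀ z ∈ U, ∀ x, ‖D z x‖ ≤ C * ‖x‖)
    {z x w : Ω → E} (hz : AEMeasurable z μ) (hzU : ∀ᵐ s ∂μ, z s ∈ U)
    (hx : MemLp x 2 μ) (hw : MemLp w 2 μ) :
    Integrable (fun s => D (z s) (x s) (w s)) μ := by
  have hcont : ContinuousOn (fun p : E × E × E => D p.1 p.2.1 p.2.2) (U ×ˢ univ) :=
    (hD.comp (continuous_fst.prodMk continuous_snd.fst).continuousOn
      fun p hp => ⟨hp.1, mem_univ _⟩).clm_apply continuous_snd.snd.continuousOn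
  have hmeas : AEMeasurable (fun s => D (z s) (x s) (w s)) μ :=
    hcont.aemeasurable_comp (hU.measurableSet.prod MeasurableSet.univ)
      (hz.prodMk (hx.1.aemeasurable.prodMk hw.1.aemeasurable))
      (hzU.mono fun s hs => ⟨hs, mem_univ _⟩)
  refine Integrable.mono' ((hx.norm.integrable_mul hw.norm).const_mul C)
    hmeas.aestronglyMeasurable ?_
  filter_upwards [hzU] with s hs
  calc ‖D (z s) (x s) (w s)‖ ≤ ‖D (z s) (x s)‖ * ‖w s‖ := (D (z s) (x s)).le_opNorm _
    _ ≤ C * ‖x s‖ * ‖w s‖ := by gcongr; exact hbound _ hs _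
    _ = C * (‖x s‖ * ‖w s‖) := mul_assoc _ _ _

theorem tendsto_zero_of_mul_le_neg {ι : Type*} {l : Filter ι} {f g : ι → ℝ} {c : ℝ}
    (hc : 0 < c) (hf : ∀ i, 0 ≤ f i) (hfg : ∀ i, c * f i ≤ -g i)
    (hg : ∀ ε > 0, ∀ᶠ i in l, -ε ≤ g i) : Tendsto f l (𝓝 0) := by
  refine tendsto_order.2 ⟨fun a ha => Eventually.of_forall fun i => ha.trans_le (hf i),
    fun a ha => (hg (c * a / 2) (by positivity)).mono fun i hi => ?_⟩
  exact lt_of_mul_lt_mul_left ((hfg i).trans_lt (by linarith [mul_pos hc ha])) hc.le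

namespace H1Curve

variable {n : ℕ} {a b : ℝ}

theorem memLp_deriv (γ : H1Curve n a b) : MemLp γ.deriv 2 (volume.restrict (Icc a b)) :=
  (memLp_two_iff_integrable_sq_norm γ.deriv_integrable.aestronglyMeasurable).2
    γ.deriv_sq_integrable

theorem continuousOn (γ : H1Curve n a b) (hab : a ≤ b) : ContinuousOn γ.toFun (Icc a b) := by
  have hprim := intervalIntegral.continuousOn_primitive_interval (a := a) (b := b)
    (uIcc_of_le hab ▸ γ.deriv_integrable)
  rw [uIcc_of_le hab] at hprim
  exact (continuousOn_const.add hprim).congr γ.eq_add_integral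

theorem integrable_apply_apply (γ : H1Curve n a b) (hab : a ≤ b)
    {D : Evec n → Evec n → Evec n →L[ℝ] ℝ} {U : Set (Evec n)} {C : ℝ} (hU : IsOpen U)
    (hD : ContinuousOn (fun p : Evec n × Evec n => D p.1 p.2) (U ×ˢ univ))
    (hbound : ∀ z ∈ U, ∀ x, ‖D z x‖ ≤ C * ‖x‖) (hγU : ∀ s ∈ Icc a b, γ.toFun s ∈ U)
    {x w : ℝ → Evec n} (hx : MemLp x 2 (volume.restrict (Icc a b)))
    (hw : MemLp w 2 (volume.restrict (Icc a b))) :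
    Integrable (fun s => D (γ.toFun s) (x s) (w s)) (volume.restrict (Icc a b)) :=
  integrable_apply_apply_of_memLp hU hD hbound
    ((γ.continuousOn hab).aemeasurable measurableSet_Icc)
    (ae_restrict_of_forall_mem measurableSet_Icc hγU) hx hw

theorem mul_integral_norm_deriv_sub_sq_le (γ η : H1Curve n a b) (hab : a ≤ b)
    {D : Evec n → Evec n → Evec n →L[ℝ] ℝ} {U : Set (Evec n)} {C c : ℝ} (hU : IsOpen U)
    (hD : ContinuousOn (fun p : Evec n × Evec n => D p.1 p.2) (U ×ˢ univ))
    (hbound : ∀ z ∈ U, ∀ x, ‖D z x‖ ≤ C * ‖x‖)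
    (hmono : ∀ z ∈ U, ∀ v w, c * ‖v - w‖ ^ 2 ≤ D z v (v - w) - D z w (v - w))
    (hγU : ∀ s ∈ Icc a b, γ.toFun s ∈ U) :
    c * ∫ s in a..b, ‖η.deriv s - γ.deriv s‖ ^ 2 ≤
      -∫ s in a..b, (D (γ.toFun s) (γ.deriv s) (η.deriv s - γ.deriv s) -
        D (γ.toFun s) (η.deriv s) (η.deriv s - γ.deriv s)) := by
  have hu := η.memLp_deriv.sub γ.memLp_deriv
  rw [← intervalIntegral.integral_const_mul, ← intervalIntegral.integral_neg]
  refine intervalIntegral.integral_mono_on hab ?_ ?_ fun s hs => ?_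
  · exact (intervalIntegrable_iff_integrableOn_Icc_of_le hab).2
      ((hu.integrable_norm_pow two_ne_zero).const_mul _)
  · exact (intervalIntegrable_iff_integrableOn_Icc_of_le hab).2
      ((γ.integrable_apply_apply hab hU hD hbound hγU γ.memLp_deriv hu).sub
        (γ.integrable_apply_apply hab hU hD hbound hγU η.memLp_deriv hu)).neg
  · linarith [hmono _ (hγU s hs) (η.deriv s) (γ.deriv s)]

end H1Curve

theorem stmt_14_general {N : ℕ} (U : Set (Evec N)) (hU : IsOpen U)
    (G : Evec N → Evec N → ℝ) (ℓ α : ℝ) (hℓ : 1 ≤ ℓ) (hα : 0 < α)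
    (hsmooth : ContDiffOn ℝ 2 (fun p : Evec N × Evec N => G p.1 p.2)
      {p : Evec N × Evec N | p.1 ∈ U ∧ p.2 ≠ 0})
    (hhomog : ∀ z ∈ U, ∀ v : Evec N, ∀ lam : ℝ, 0 < lam → G z (lam • v) = lam ^ 2 * G z v)
    (hlower : ∀ z ∈ U, ∀ v : Evec N, (1 / ℓ) * ‖v‖ ^ 2 ≤ G z v)
    (hupper : ∀ z ∈ U, ∀ v : Evec N, G z v ≤ ℓ * ‖v‖ ^ 2)
    (hconv : ∀ z ∈ U, ∀ v : Evec N, v ≠ 0 → ∀ w : Evec N,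
      α * ‖w‖ ^ 2 ≤ fderiv ℝ (fun u => fderiv ℝ (fun w' => G z w') u w) v w)
    (dv : Evec N → Evec N → Evec N →L[ℝ] ℝ)
    (hdv0 : ∀ z, dv z 0 = 0)
    (hdv : ∀ z v, v ≠ 0 → dv z v = fderiv ℝ (fun w => G z w) v)
    (a b : ℝ) (hab : a < b)
    (ξn : ℕ → H1Curve N a b) (ξ : H1Curve N a b)
    (hmem : ∀ k : ℕ, ∀ s ∈ Icc a b, (ξn k).toFun s ∈ U)
    (hliminf : ∀ ε > (0:ℝ), ∀ᶠ k in atTop,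
      -ε ≤ ∫ s in a..b,
        (dv ((ξn k).toFun s) ((ξn k).deriv s) (ξ.deriv s - (ξn k).deriv s) -
          dv ((ξn k).toFun s) (ξ.deriv s) (ξ.deriv s - (ξn k).deriv s))) :
    Tendsto (fun k => ∫ s in a..b, ‖ξ.deriv s - (ξn k).deriv s‖ ^ 2) atTop (nhds 0) := by
  have hGz : ∀ z ∈ U, ∀ y, y ≠ 0 → ContDiffAt ℝ 2 (G z) y := fun z hz y hy =>
    contDiffAt_fiber_of_contDiffOn hU hsmooth hz hy
  have hnn : ∀ z ∈ U, ∀ v, 0 ≤ G z v := fun z hz v =>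
    (mul_nonneg (one_div_nonneg.2 (by linarith)) (sq_nonneg _)).trans (hlower z hz v)
  have hcv0 : ∀ z ∈ U, ∀ y, y ≠ 0 → ∀ w, 0 ≤ fderiv ℝ (fun y' => fderiv ℝ (G z) y' w) y w :=
    fun z hz y hy w => (mul_nonneg hα.le (sq_nonneg _)).trans (hconv z hz y hy w)
  have hF0 : ∀ z ∈ U, fderiv ℝ (G z) 0 = 0 := fun z hz =>
    fderiv_zero_eq_zero_of_le_sq (hnn z hz) (hupper z hz)
  have hdv_eq : ∀ z ∈ U, dv z = fderiv ℝ (G z) := by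
    intro z hz
    funext x
    rcases eq_or_ne x 0 with rfl | hx
    · rw [hdv0, hF0 z hz]
    · exact hdv z x hx
  have hbound : ∀ z ∈ U, ∀ x, ‖dv z x‖ ≤ 9 / 2 * ℓ * ‖x‖ := fun z hz x => hdv_eq z hz ▸
    norm_fderiv_le_of_le_sq (hGz z hz) (hcv0 z hz) (hnn z hz) (hupper z hz) x
  have hmono : ∀ z ∈ U, ∀ v w, min α (2 * (1 / ℓ)) * ‖v - w‖ ^ 2 ≤
      dv z v (v - w) - dv z w (v - w) := fun z hz v w => hdv_eq z hz ▸
    mul_norm_sub_sq_le_fderiv_sub (hGz z hz) (hF0 z hz) (hconv z hz) (hhomog z hz)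
      (hlower z hz) v w
  have hcont := continuousOn_uncurry_of_eq_fderiv hU (hsmooth.of_le one_le_two)
    (fun z _ x hx => hdv z x hx) hbound
  exact tendsto_zero_of_mul_le_neg (lt_min hα (mul_pos two_pos (one_div_pos.2 (by linarith))))
    (fun k => intervalIntegral.integral_nonneg hab.le fun s _ => by positivity)
    (fun k => (ξn k).mul_integral_norm_deriv_sub_sq_le ξ hab.le hU hcont hbound hmono (hmem k))
    hliminf

/-- Strong `L²` convergence of derivatives from the monotonicity-type liminf condition:
if `ξ_n → ξ` uniformly, `ξ̇_n ⇀ ξ̇` weakly in `L²`, and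
`liminf ∫ (d_vG̃(ξ_n,ξ̇_n) − d_vG̃(ξ_n,ξ̇))[ξ̇ − ξ̇_n] ≥ 0`, then `ξ̇_n → ξ̇` strongly in `L²`.
Here `dv` is the fiberwise differential of the Finsler-type energy `G̃`, extended by `0` on
the zero section. -/
theorem stmt_14 {N : ℕ} (U : Set (Evec N)) (hU : IsOpen U)
    (G : Evec N → Evec N → ℝ) (ℓ α : ℝ) (hℓ : 1 ≤ ℓ) (hα : 0 < α)
    (hcont : ContinuousOn (fun p : Evec N × Evec N => G p.1 p.2) (U ×ˢ univ))
    (hsmooth : ContDiffOn ℝ 2 (fun p : Evec N × Evec N => G p.1 p.2)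
      {p : Evec N × Evec N | p.1 ∈ U ∧ p.2 ≠ 0})
    (hhomog : ∀ z ∈ U, ∀ v : Evec N, ∀ lam : ℝ, 0 < lam → G z (lam • v) = lam ^ 2 * G z v)
    (hlower : ∀ z ∈ U, ∀ v : Evec N, (1 / ℓ) * ‖v‖ ^ 2 ≤ G z v)
    (hupper : ∀ z ∈ U, ∀ v : Evec N, G z v ≤ ℓ * ‖v‖ ^ 2)
    (hconv : ∀ z ∈ U, ∀ v : Evec N, v ≠ 0 → ∀ w : Evec N,
      α * ‖w‖ ^ 2 ≤ fderiv ℝ (fun u => fderiv ℝ (fun w' => G z w') u w) v w)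
    (dv : Evec N → Evec N → Evec N →L[ℝ] ℝ)
    (hdv0 : ∀ z, dv z 0 = 0)
    (hdv : ∀ z v, v ≠ 0 → dv z v = fderiv ℝ (fun w => G z w) v)
    (a b : ℝ) (hab : a < b)
    (ξn : ℕ → H1Curve N a b) (ξ : H1Curve N a b)
    (hmem : ∀ k : ℕ, ∀ s ∈ Icc a b, (ξn k).toFun s ∈ U)
    (hmemξ : ∀ s ∈ Icc a b, ξ.toFun s ∈ U)
    (hunif : TendstoUniformlyOn (fun k s => (ξn k).toFun s) ξ.toFun atTop (Icc a b))
    (hweak : ∀ g : ℝ → Evec N, MemLp g 2 (volume.restrict (Icc a b)) →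
      Tendsto (fun k => ∫ s in a..b, ⟪(ξn k).deriv s, g s⟫) atTop
        (nhds (∫ s in a..b, ⟪ξ.deriv s, g s⟫)))
    (hliminf : ∀ ε > (0:ℝ), ∀ᶠ k in atTop,
      -ε ≤ ∫ s in a..b,
        (dv ((ξn k).toFun s) ((ξn k).deriv s) (ξ.deriv s - (ξn k).deriv s) -
          dv ((ξn k).toFun s) (ξ.deriv s) (ξ.deriv s - (ξn k).deriv s))) :
    Tendsto (fun k => ∫ s in a..b, ‖ξ.deriv s - (ξn k).deriv s‖ ^ 2) atTop (nhds 0) :=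
  stmt_14_general U hU G ℓ α hℓ hα hsmooth hhomog hlower hupper hconv dv hdv0 hdv a b hab ξn ξ hmem
    hliminf
end
end

section
/- Let δ > 0, L > 0 with Lδ < 8, and let χ_δ(t) := t²/(δ−t)² for t ∈ (0,δ). If t ∈ (0,δ) satisfies χ'_δ(t) ≤ L(1 + χ_δ(t)), then χ_δ(t) ≤ Lδ/(8 − Lδ), and consequently χ'_δ(t) ≤ 8L/(8 − Lδ). -/
/-!
On `(0, δ)` one has `χ'_δ = (2δ / (t(δ - t))) χ_δ ≥ (8/δ) χ_δ`, because `t(δ - t) ≤ δ²/4`.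
The hypothesis then gives `(8/δ - L) χ_δ ≤ L`, i.e. the bound on `χ_δ`, and feeding that bound
back into `χ'_δ ≤ L(1 + χ_δ)` bounds `χ'_δ`.
-/

open Set

noncomputable section

def chi (δ t : ℝ) : ℝ := if t ≤ 0 then 0 else t ^ 2 / (δ - t) ^ 2

lemma chi_of_pos {δ t : ℝ} (ht : 0 < t) : chi δ t = t ^ 2 / (δ - t) ^ 2 := by
  simp [chi, not_le.mpr ht]

lemma hasDerivAt_chi {δ t : ℝ} (ht : 0 < t) (htδ : t ≠ δ) :
    HasDerivAt (chi δ) (2 * δ * t / (δ - t) ^ 3) t := by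
  have hδt : δ - t ≠ 0 := sub_ne_zero.mpr htδ.symm
  have hquot : HasDerivAt (fun x : ℝ => x ^ 2 / (δ - x) ^ 2) (2 * δ * t / (δ - t) ^ 3) t := by
    have hden : HasDerivAt (fun x : ℝ => (δ - x) ^ 2) (2 * (δ - t) * (-1)) t := by
      simpa using ((hasDerivAt_id t).const_sub δ).fun_pow 2
    refine ((hasDerivAt_pow 2 t).fun_div hden (pow_ne_zero 2 hδt)).congr_deriv ?_
    field_simp
    ring
  exact hquot.congr_of_eventuallyEq <|
    (lt_mem_nhds ht).mono fun x hx => chi_of_pos hx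

lemma deriv_chi_eq {δ t : ℝ} (ht : 0 < t) (htδ : t ≠ δ) :
    deriv (chi δ) t = 2 * δ / (t * (δ - t)) * chi δ t := by
  have hδt : δ - t ≠ 0 := sub_ne_zero.mpr htδ.symm
  rw [(hasDerivAt_chi ht htδ).deriv, chi_of_pos ht]
  field_simp

lemma eight_div_le_two_mul_div_mul_sub {δ t : ℝ} (ht : t ∈ Ioo 0 δ) :
    8 / δ ≤ 2 * δ / (t * (δ - t)) := by
  obtain ⟨h0, h1⟩ := ht
  have hδt : 0 < δ - t := sub_pos.mpr h1
  rw [div_le_div_iff₀ (by linarith) (by positivity)]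
  nlinarith [sq_nonneg (δ - 2 * t)]

lemma eight_div_mul_chi_le_deriv_chi {δ t : ℝ} (ht : t ∈ Ioo 0 δ) :
    8 / δ * chi δ t ≤ deriv (chi δ) t := by
  rw [deriv_chi_eq ht.1 ht.2.ne, chi_of_pos ht.1]
  exact mul_le_mul_of_nonneg_right (eight_div_le_two_mul_div_mul_sub ht) (by positivity)

lemma chi_le_of_deriv_chi_le {δ L t : ℝ} (hLδ : L * δ < 8) (ht : t ∈ Ioo 0 δ)
    (h : deriv (chi δ) t ≤ L * (1 + chi δ t)) :
    chi δ t ≤ L * δ / (8 - L * δ) := by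
  have hδ : 0 < δ := ht.1.trans ht.2
  have hkey : 8 / δ * chi δ t ≤ L * (1 + chi δ t) :=
    (eight_div_mul_chi_le_deriv_chi ht).trans h
  rw [div_mul_eq_mul_div, div_le_iff₀ hδ] at hkey
  rw [le_div_iff₀ (by linarith)]
  linarith

theorem stmt_18_general (δ L t : ℝ) (hL : 0 < L) (hLδ : L * δ < 8)
    (ht : t ∈ Ioo (0:ℝ) δ)
    (h : deriv (chi δ) t ≤ L * (1 + chi δ t)) :
    chi δ t ≤ L * δ / (8 - L * δ) ∧ deriv (chi δ) t ≤ 8 * L / (8 - L * δ) := by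
  have hchi := chi_le_of_deriv_chi_le hLδ ht h
  refine ⟨hchi, ?_⟩
  calc deriv (chi δ) t ≤ L * (1 + chi δ t) := h
    _ ≤ L * (1 + L * δ / (8 - L * δ)) := by gcongr
    _ = 8 * L / (8 - L * δ) := by
      field_simp [(sub_pos.mpr hLδ).ne']
      ring

/-- If `Lδ < 8` and `t ∈ (0,δ)` satisfies `χ'_δ(t) ≤ L(1 + χ_δ(t))`, then
`χ_δ(t) ≤ Lδ/(8 − Lδ)` and consequently `χ'_δ(t) ≤ 8L/(8 − Lδ)`. -/
theorem stmt_18 (δ L t : ℝ) (hδ : 0 < δ) (hL : 0 < L) (hLδ : L * δ < 8)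
    (ht : t ∈ Ioo (0:ℝ) δ)
    (h : deriv (chi δ) t ≤ L * (1 + chi δ t)) :
    chi δ t ≤ L * δ / (8 - L * δ) ∧ deriv (chi δ) t ≤ 8 * L / (8 - L * δ) :=
  stmt_18_general δ L t hL hLδ ht h
end
end
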